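/- The morphic and antimorphic θ-avoidance indices of θ(α) α α are both exactly 3. -/

import Mathlib

/-!
The Thue–Morse word `t` is overlap-free: an overlap of even period in `t` halves to an overlap
of `t` at half the period, and one of odd period `≥ 3` would force three equal consecutive letters,
since `t (2n + 1) = !t (2n)`. Hence the ternary word of first differences `t (n + 1) - t n` is
square-free, and a square-free word contains no `θ(u) u u` whatever `θ` is.

Conversely, a word over at most two letters either contains some `a b b`, which is `θ(b) b b` for
the transposition `θ` of `a` and `b`, or continues as `(b c)^ω` after its first letter; then
`bc bc bc` is `θ(u) u u` for `u = bc`, with `θ = id` in the morphic case and `θ` the transposition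
of `b` and `c` in the antimorphic one.
-/

/-- `v` is a factor of the infinite word `w`. -/
def FactorOf {α : Type*} (v : List α) (w : ℕ → α) : Prop :=
  ∃ i : ℕ, v = (List.range v.length).map fun j => w (i + j)

open Function

/-- `thueMorse n` is the parity of the binary digit sum of `n`. -/
def thueMorse : ℕ → Bool :=
  Nat.binaryRec false fun b _ t => xor b t

lemma thueMorse_bit (b : Bool) (n : ℕ) : thueMorse (Nat.bit b n) = xor b (thueMorse n) :=
  Nat.binaryRec_eq b n (Or.inl rfl)

lemma thueMorse_two_mul (n : ℕ) : thueMorse (2 * n) = thueMorse n := by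
  simpa [Nat.bit_val] using thueMorse_bit false n

lemma thueMorse_two_mul_add_one (n : ℕ) : thueMorse (2 * n + 1) = !thueMorse n := by
  simpa [Nat.bit_val] using thueMorse_bit true n

lemma thueMorse_not_three_eq (p : ℕ) :
    ¬ (thueMorse p = thueMorse (p + 1) ∧ thueMorse (p + 1) = thueMorse (p + 2)) := by
  obtain ⟨m, rfl | rfl⟩ := Nat.even_or_odd' p
  · rintro ⟨h, -⟩
    simp [thueMorse_two_mul, thueMorse_two_mul_add_one] at h
  · rintro ⟨-, h⟩
    rw [show 2 * m + 1 + 1 = 2 * (m + 1) by ring, show 2 * m + 1 + 2 = 2 * (m + 1) + 1 by ring,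
      thueMorse_two_mul, thueMorse_two_mul_add_one] at h
    simp at h

lemma thueMorse_eq_thueMorse_succ_of_odd_shift {m n : ℕ}
    (h₀ : thueMorse (2 * m + 1) = thueMorse (2 * n))
    (h₁ : thueMorse (2 * m + 2) = thueMorse (2 * n + 1)) :
    thueMorse m = thueMorse (m + 1) := by
  rw [thueMorse_two_mul_add_one, thueMorse_two_mul] at h₀
  rw [show 2 * m + 2 = 2 * (m + 1) by ring, thueMorse_two_mul, thueMorse_two_mul_add_one] at h₁
  rw [h₁, ← h₀, Bool.not_not]

/-- No factor `a x a x a` with `a` a letter; here `L = |a x|`. -/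
def IsOverlapFree {α : Type*} (w : ℕ → α) : Prop :=
  ∀ i L, 0 < L → ¬ ∀ j ≤ L, w (i + j) = w (i + j + L)

def IsSquareFree {α : Type*} (w : ℕ → α) : Prop :=
  ∀ i L, 0 < L → ¬ ∀ j < L, w (i + j) = w (i + j + L)

theorem thueMorse_isOverlapFree : IsOverlapFree thueMorse := by
  intro i L hL h
  induction L using Nat.strong_induction_on generalizing i with
  | _ L IH =>
    have shift : ∀ j ≤ L, ∀ p q, p = i + j → q = i + j + L → thueMorse p = thueMorse q :=
      fun j hj p q hp hq => hp ▸ hq ▸ h j hj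
    obtain ⟨K, rfl | rfl⟩ := Nat.even_or_odd' L
    · obtain ⟨m, rfl | rfl⟩ := Nat.even_or_odd' i
      · refine IH K (by omega) m (by omega) fun j hj => ?_
        have := shift (2 * j) (by omega) (2 * (m + j)) (2 * (m + j + K)) (by omega) (by omega)
        rwa [thueMorse_two_mul, thueMorse_two_mul] at this
      · refine IH K (by omega) m (by omega) fun j hj => ?_
        have := shift (2 * j) (by omega) (2 * (m + j) + 1) (2 * (m + j + K) + 1)
          (by omega) (by omega)
        rwa [thueMorse_two_mul_add_one, thueMorse_two_mul_add_one, Bool.not_inj_iff] at this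
    · obtain rfl | hK := Nat.eq_zero_or_pos K
      · exact thueMorse_not_three_eq i
          ⟨shift 0 (by omega) _ _ rfl rfl, shift 1 (by omega) _ _ rfl rfl⟩
      obtain ⟨m, rfl | rfl⟩ := Nat.even_or_odd' i
      · refine thueMorse_not_three_eq (m + K) ⟨?_, ?_⟩
        · exact thueMorse_eq_thueMorse_succ_of_odd_shift (n := m)
            (shift 0 (by omega) _ _ (by omega) (by omega)).symm
            (shift 1 (by omega) _ _ (by omega) (by omega)).symm
        · exact thueMorse_eq_thueMorse_succ_of_odd_shift (m := m + K + 1) (n := m + 1)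
            (shift 2 (by omega) _ _ (by omega) (by omega)).symm
            (shift 3 (by omega) _ _ (by omega) (by omega)).symm
      · refine thueMorse_not_three_eq m ⟨?_, ?_⟩
        · exact thueMorse_eq_thueMorse_succ_of_odd_shift (n := m + K + 1)
            (shift 0 (by omega) _ _ (by omega) (by omega))
            (shift 1 (by omega) _ _ (by omega) (by omega))
        · exact thueMorse_eq_thueMorse_succ_of_odd_shift (m := m + 1) (n := m + K + 2)
            (shift 2 (by omega) _ _ (by omega) (by omega))
            (shift 3 (by omega) _ _ (by omega) (by omega))

/-- Encodes `t (n + 1) - t n ∈ {1, -1, 0}` from the pair `(t n, t (n + 1))`. -/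
def pairCode : Bool → Bool → Fin 3
  | false, true => 0
  | true, false => 1
  | _, _ => 2

lemma xor_eq_xor_of_pairCode_eq {a b c d : Bool} (h : pairCode a b = pairCode c d) :
    xor a c = xor b d := by
  revert h; cases a <;> cases b <;> cases c <;> cases d <;> decide

lemma eq_of_pairCode_eq_of_ne {a b c d : Bool} (h : pairCode a b = pairCode c d) (hac : a ≠ c) :
    a = b := by
  revert h hac; cases a <;> cases b <;> cases c <;> cases d <;> decide

lemma apply_eq_apply_zero_of_forall_lt_eq_succ {β : Type*} {f : ℕ → β} {L : ℕ}
    (h : ∀ j < L, f j = f (j + 1)) : ∀ j ≤ L, f j = f 0 := by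
  intro j hj
  induction j with
  | zero => rfl
  | succ j ih => rw [← h j (by omega), ih (by omega)]

theorem IsOverlapFree.isSquareFree_pairCode {t : ℕ → Bool} (ht : IsOverlapFree t) :
    IsSquareFree fun n => pairCode (t n) (t (n + 1)) := by
  intro i L hL hsq
  have hxor : ∀ j ≤ L, xor (t (i + j)) (t (i + j + L)) = xor (t i) (t (i + L)) :=
    apply_eq_apply_zero_of_forall_lt_eq_succ (f := fun j => xor (t (i + j)) (t (i + j + L)))
      fun j hj => by
        simpa only [← add_assoc, Nat.add_right_comm _ 1 L]
          using xor_eq_xor_of_pairCode_eq (hsq j hj)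
  by_cases h₀ : t i = t (i + L)
  · refine ht i L hL fun j hj => ?_
    simpa [h₀] using hxor j hj
  · have hconst : ∀ j ≤ L, t (i + j) = t i :=
      apply_eq_apply_zero_of_forall_lt_eq_succ (f := fun j => t (i + j)) fun j hj =>
        eq_of_pairCode_eq_of_ne (hsq j hj) fun he => h₀ (by simpa [he] using hxor j hj.le)
    exact h₀ (hconst L le_rfl).symm

lemma exists_eq_map_range_of_factorOf_append {α : Type*} {x v : List α} {w : ℕ → α}
    (h : FactorOf (x ++ v) w) : ∃ i, x = (List.range x.length).map (fun j => w (i + j)) ∧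
      v = (List.range v.length).map (fun j => w (i + x.length + j)) := by
  obtain ⟨i, h⟩ := h
  rw [List.length_append, List.range_add, List.map_append, List.map_map] at h
  obtain ⟨hx, hv⟩ := List.append_inj h (by simp)
  refine ⟨i, hx, hv.trans (List.map_congr_left fun j _ => ?_)⟩
  simp [add_assoc]

theorem IsSquareFree.not_factorOf_append_square {α : Type*} {w : ℕ → α} (hw : IsSquareFree w)
    (x : List α) {u : List α} (hu : u ≠ []) : ¬ FactorOf (x ++ u ++ u) w := by
  intro hf
  rw [List.append_assoc] at hf
  obtain ⟨_, -, huu⟩ := exists_eq_map_range_of_factorOf_append hf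
  obtain ⟨i, h₁, h₂⟩ := exists_eq_map_range_of_factorOf_append ⟨_, huu⟩
  refine hw i u.length (List.length_pos_iff.2 hu) fun j hj => ?_
  have := List.map_inj_left.1 (h₁.symm.trans h₂) j (List.mem_range.2 hj)
  rwa [Nat.add_right_comm] at this

lemma Fin.eq_of_ne_of_ne_of_le_two {k : ℕ} (hk : k ≤ 2) {a b c : Fin k} (hab : a ≠ b)
    (hbc : b ≠ c) : a = c := by
  have := a.isLt; have := b.isLt; have := c.isLt
  rw [Ne, Fin.ext_iff] at hab hbc
  exact Fin.ext (by omega)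

lemma factorOf_swap_map_append_square {k : ℕ} {w : ℕ → Fin k} {i : ℕ}
    (h : w (i + 1) = w (i + 2)) :
    FactorOf ([w (i + 1)].map (Equiv.swap (w i) (w (i + 1))) ++ [w (i + 1)] ++ [w (i + 1)]) w :=
  ⟨i, by simp [List.range_succ, ← h]⟩

theorem exists_involutive_factorOf_of_le_two {k : ℕ} (hk : k ≤ 2) (w : ℕ → Fin k) :
    (∃ g : Fin k → Fin k, Involutive g ∧ ∃ u, u ≠ [] ∧ FactorOf (u.map g ++ u ++ u) w) ∧
    (∃ g : Fin k → Fin k, Involutive g ∧ ∃ u, u ≠ [] ∧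
      FactorOf ((u.map g).reverse ++ u ++ u) w) := by
  by_cases hsq : ∃ i, w (i + 1) = w (i + 2)
  · obtain ⟨i, hi⟩ := hsq
    have hswap : Involutive (Equiv.swap (w i) (w (i + 1))) := Equiv.swap_apply_self _ _
    exact ⟨⟨_, hswap, _, List.cons_ne_nil _ _, factorOf_swap_map_append_square hi⟩,
      ⟨_, hswap, [w (i + 1)], List.cons_ne_nil _ _, by
        simpa only [List.map_cons, List.map_nil, List.reverse_singleton]
          using factorOf_swap_map_append_square hi⟩⟩
  · push Not at hsq
    have hper : ∀ n, w (n + 3) = w (n + 1) := fun n =>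
      Fin.eq_of_ne_of_ne_of_le_two hk (hsq (n + 1)).symm (hsq n).symm
    have h₃ := hper 0
    have h₄ := hper 1
    have h₅ := (hper 2).trans h₃
    have h₆ := (hper 3).trans h₄
    refine ⟨⟨id, fun _ => rfl, [w 1, w 2], List.cons_ne_nil _ _, 1, ?_⟩,
      ⟨Equiv.swap (w 1) (w 2), Equiv.swap_apply_self _ _, [w 1, w 2], List.cons_ne_nil _ _, 1, ?_⟩⟩
    · simp [List.range_succ, h₃, h₄, h₅, h₆]
    · simp [List.range_succ, h₃, h₄, h₅, h₆]

/-- The morphic and antimorphic θ-avoidance indices of `θ(α) α α` are both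
exactly `3`. -/
theorem index_ta_aa_eq_three :
    IsLeast {k : ℕ | ∃ w : ℕ → Fin k,
      ∀ g : Fin k → Fin k, (∀ z, g (g z) = z) →
        ∀ u : List (Fin k), u ≠ [] → ¬ FactorOf (u.map g ++ u ++ u) w} 3 ∧
    IsLeast {k : ℕ | ∃ w : ℕ → Fin k,
      ∀ g : Fin k → Fin k, (∀ z, g (g z) = z) →
        ∀ u : List (Fin k), u ≠ [] →
          ¬ FactorOf ((u.map g).reverse ++ u ++ u) w} 3 := by
  have hfree := thueMorse_isOverlapFree.isSquareFree_pairCode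
  refine ⟨⟨⟨_, fun _ _ _ hu => hfree.not_factorOf_append_square _ hu⟩, ?_⟩,
    ⟨⟨_, fun _ _ _ hu => hfree.not_factorOf_append_square _ hu⟩, ?_⟩⟩
  · rintro k ⟨w, hw⟩
    by_contra! hk
    obtain ⟨⟨g, hg, u, hu, hf⟩, -⟩ := exists_involutive_factorOf_of_le_two (by omega) w
    exact hw g hg u hu hf
  · rintro k ⟨w, hw⟩
    by_contra! hk
    obtain ⟨-, g, hg, u, hu, hf⟩ := exists_involutive_factorOf_of_le_two (by omega) w
    exact hw g hg u hu hf
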